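/- There exist constants C ≥ 1 and β ∈ (0,1), depending only on r, such that the following holds. Let F be an orientation-preserving, dissipative C^r-diffeomorphism (r ≥ 2) from a domain Ω ⊆ ℝ² onto its image F(Ω) ⊆ Ω (dissipative meaning Jac_pF < 1 for all p ∈ Ω), let Λ ⊆ Ω be a compact totally invariant set, λ ∈ (0,1), and let ε ∈ (0,1) satisfy C·ε^β < 1. Suppose c₁ ∈ Λ is an ε-regular critical value: there is a direction E* at c₁ such that c₁ is ∞-times forward (1,ε)_v-regular along E* and ∞-times backward (1,ε)_h-regular along E*. Then c₁ is a general critical point of F, and for every m ∈ ℤ ∖ {0}, the point F^m(c₁) is not a general critical point; that is, c₁ is the unique general critical point in its orbit. -/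

import Mathlib

open Real Function Set Filter MeasureTheory

noncomputable section

/-- The Euclidean plane `ℝ²` with the Euclidean norm. -/
abbrev E2 := EuclideanSpace ℝ (Fin 2)

/-- The Jacobian determinant of `F` at `p`. -/
def jacAt (F : E2 → E2) (p : E2) : ℝ :=
  LinearMap.det (fderiv ℝ F p).toLinearMap

/-- The angle between the directions (lines) spanned by the unit vectors `u` and `v`. -/
def lineAngle (u v : E2) : ℝ :=
  Real.arccos |(@inner ℝ E2 _ u v)|

/-- The unit vector spanning the image under `T` of the direction spanned by `v`. -/
def pushDir (T : E2 →L[ℝ] E2) (v : E2) : E2 :=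
  ‖T v‖⁻¹ • T v

/-- The `m`-th iterate (`m : ℤ`), computed using `F` forwards and its inverse `G` backwards. -/
def iterZ (F G : E2 → E2) (m : ℤ) : E2 → E2 :=
  if 0 ≤ m then F^[m.toNat] else G^[(-m).toNat]

/-- `p` is `N`-times forward `(L, ε)_v`-regular along the direction of the unit vector `v`:
`L⁻¹ λ^((1+ε)n) ≤ (Jac_p Fⁿ)^s / ‖D_pFⁿ|_E‖^(s-1) ≤ L λ^((1-ε)n)` for `s ∈ {-r, r-1}`,
`1 ≤ n ≤ N`. -/
def FwdRegV (F : E2 → E2) (p : E2) (lam L ε : ℝ) (r : ℕ) (N : ℕ∞) (v : E2) : Prop :=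
  ∀ n : ℕ, 1 ≤ n → (n : ℕ∞) ≤ N → ∀ s : ℤ, s = -(r : ℤ) ∨ s = (r : ℤ) - 1 →
    L⁻¹ * lam ^ ((1 + ε) * (n : ℝ)) ≤
        jacAt (F^[n]) p ^ s / ‖fderiv ℝ (F^[n]) p v‖ ^ (s - 1) ∧
      jacAt (F^[n]) p ^ s / ‖fderiv ℝ (F^[n]) p v‖ ^ (s - 1) ≤
        L * lam ^ ((1 - ε) * (n : ℝ))

/-- `p` is `N`-times forward `(L, ε)_h`-regular along the direction of the unit vector `v`:
`L⁻¹ λ^((1+ε)n) ≤ Jac_p Fⁿ / ‖D_pFⁿ|_E‖^(s+1) ≤ L λ^((1-ε)n)` for `s ∈ {-r+1, r}`,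
`1 ≤ n ≤ N`. -/
def FwdRegH (F : E2 → E2) (p : E2) (lam L ε : ℝ) (r : ℕ) (N : ℕ∞) (v : E2) : Prop :=
  ∀ n : ℕ, 1 ≤ n → (n : ℕ∞) ≤ N → ∀ s : ℤ, s = -(r : ℤ) + 1 ∨ s = (r : ℤ) →
    L⁻¹ * lam ^ ((1 + ε) * (n : ℝ)) ≤
        jacAt (F^[n]) p / ‖fderiv ℝ (F^[n]) p v‖ ^ (s + 1) ∧
      jacAt (F^[n]) p / ‖fderiv ℝ (F^[n]) p v‖ ^ (s + 1) ≤
        L * lam ^ ((1 - ε) * (n : ℝ))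

/-- `p` is `M`-times backward `(L, ε)_v`-regular along the direction of the unit vector `v`;
the backward iterates `F^(-n)` are given by the iterates of the inverse map `G`. -/
def BwdRegV (G : E2 → E2) (p : E2) (lam L ε : ℝ) (r : ℕ) (M : ℕ∞) (v : E2) : Prop :=
  ∀ n : ℕ, 1 ≤ n → (n : ℕ∞) ≤ M → ∀ s : ℤ, s = -(r : ℤ) ∨ s = (r : ℤ) - 1 →
    L⁻¹ * lam ^ (-(1 - ε) * (n : ℝ)) ≤
        jacAt (G^[n]) p ^ s / ‖fderiv ℝ (G^[n]) p v‖ ^ (s - 1) ∧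
      jacAt (G^[n]) p ^ s / ‖fderiv ℝ (G^[n]) p v‖ ^ (s - 1) ≤
        L * lam ^ (-(1 + ε) * (n : ℝ))

/-- `p` is `M`-times backward `(L, ε)_h`-regular along the direction of the unit vector `v`. -/
def BwdRegH (G : E2 → E2) (p : E2) (lam L ε : ℝ) (r : ℕ) (M : ℕ∞) (v : E2) : Prop :=
  ∀ n : ℕ, 1 ≤ n → (n : ℕ∞) ≤ M → ∀ s : ℤ, s = -(r : ℤ) + 1 ∨ s = (r : ℤ) →
    L⁻¹ * lam ^ (-(1 - ε) * (n : ℝ)) ≤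
        jacAt (G^[n]) p / ‖fderiv ℝ (G^[n]) p v‖ ^ (s + 1) ∧
      jacAt (G^[n]) p / ‖fderiv ℝ (G^[n]) p v‖ ^ (s + 1) ≤
        L * lam ^ (-(1 + ε) * (n : ℝ))

/-- `F` is `η`-homogeneous on `Λ` with rate `lam`. -/
def Homog (F : E2 → E2) (Λ : Set E2) (lam η : ℝ) : Prop :=
  ∀ p ∈ Λ,
    (∀ v : E2, ‖v‖ = 1 →
      lam ^ (1 + η) < ‖fderiv ℝ F p v‖ ∧ ‖fderiv ℝ F p v‖ < lam ^ (-η)) ∧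
    lam ^ (1 + η) < jacAt F p ∧ jacAt F p < lam ^ (1 - η)

/-- Simplified (homogeneous) forward `(L, δ)_v`-regularity:
`‖D_pFⁿ|_E‖ ≤ L λ^((1-δ)n)` for `1 ≤ n ≤ N`. -/
def SFwdV (F : E2 → E2) (p : E2) (lam L δ : ℝ) (N : ℕ∞) (v : E2) : Prop :=
  ∀ n : ℕ, 1 ≤ n → (n : ℕ∞) ≤ N →
    ‖fderiv ℝ (F^[n]) p v‖ ≤ L * lam ^ ((1 - δ) * (n : ℝ))

/-- Simplified (homogeneous) backward `(L, δ)_v`-regularity: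
`‖D_pF^(-n)|_E‖ ≥ L⁻¹ λ^(-(1-δ)n)` for `1 ≤ n ≤ M`. -/
def SBwdV (G : E2 → E2) (p : E2) (lam L δ : ℝ) (M : ℕ∞) (v : E2) : Prop :=
  ∀ n : ℕ, 1 ≤ n → (n : ℕ∞) ≤ M →
    L⁻¹ * lam ^ (-(1 - δ) * (n : ℝ)) ≤ ‖fderiv ℝ (G^[n]) p v‖

/-- Simplified (homogeneous) forward `(L, δ)_h`-regularity:
`‖D_pFⁿ|_E‖ ≥ L⁻¹ λ^(δn)` for `1 ≤ n ≤ N`. -/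
def SFwdH (F : E2 → E2) (p : E2) (lam L δ : ℝ) (N : ℕ∞) (v : E2) : Prop :=
  ∀ n : ℕ, 1 ≤ n → (n : ℕ∞) ≤ N →
    L⁻¹ * lam ^ (δ * (n : ℝ)) ≤ ‖fderiv ℝ (F^[n]) p v‖

/-- Simplified (homogeneous) backward `(L, δ)_h`-regularity:
`‖D_pF^(-n)|_E‖ ≤ L λ^(-δn)` for `1 ≤ n ≤ M`. -/
def SBwdH (G : E2 → E2) (p : E2) (lam L δ : ℝ) (M : ℕ∞) (v : E2) : Prop :=
  ∀ n : ℕ, 1 ≤ n → (n : ℕ∞) ≤ M →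
    ‖fderiv ℝ (G^[n]) p v‖ ≤ L * lam ^ (-δ * (n : ℝ))

/-- `c` is a general critical point of `F` (with inverse `G`): there is a direction `E*`
at `c` with projective derivative `∂_ℙF^(±n)(E*) = Jac_c F^(±n)/‖D_cF^(±n)|_{E*}‖² ≥ 1`
for all `n ≥ 1`. -/
def GenCritPoint (F G : E2 → E2) (c : E2) : Prop :=
  ∃ v : E2, ‖v‖ = 1 ∧ ∀ n : ℕ, 1 ≤ n →
    1 ≤ jacAt (F^[n]) c / ‖fderiv ℝ (F^[n]) c v‖ ^ 2 ∧
    1 ≤ jacAt (G^[n]) c / ‖fderiv ℝ (G^[n]) c v‖ ^ 2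

open Module Topology
open scoped RealInnerProductSpace

/-!
Let `v` be a unit vector of `E*`. Taking logarithms, the combination with weights `r - 1` and `r`
of the two upper bounds in the forward `(1,ε)_v`-regularity of `c₁` gives
`‖D_{c₁}Fⁿ v‖² ≤ λ^{(1-ε)n} Jac_{c₁}Fⁿ`, and the combination with weights `r` and `r - 1` of the
two lower bounds in the backward `(1,ε)_h`-regularity gives the same for `F⁻¹`. So `E*` is a
general critical direction, with an exponential margin.

If `F^k(c₁)`, `k > 0`, were critical along `w`, pull `w` back to `z` at `c₁`. Forward criticality
of `w` gives `‖D_{c₁}F^N z‖² ≤ Jac_{c₁}F^N / Jac_{c₁}F^k`; since `D_{c₁}F^N` multiplies areas by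
`Jac_{c₁}F^N`, the area spanned by `z` and `v` is `O(λ^{(1-ε)N/2})`, so `z ∈ E*`. Backward
criticality of `w` at time `k` then forces `Jac_{c₁}F^k ≤ ‖D_{c₁}F^k v‖²`, against the margin.
For `k < 0` exchange the roles of `F` and `F⁻¹`.
-/

namespace Orientation

variable {E : Type*} [NormedAddCommGroup E] [InnerProductSpace ℝ E] [Fact (finrank ℝ E = 2)]
  (o : Orientation ℝ E (Fin 2))

theorem areaForm_map_linearMap (T : E →ₗ[ℝ] E) (x y : E) :
    o.areaForm (T x) (T y) = LinearMap.det T * o.areaForm x y := by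
  have hb := o.finOrthonormalBasis_orientation two_pos Fact.out
  simp only [areaForm_to_volumeForm, o.volumeForm_robust _ hb]
  rw [← Basis.det_comp]
  congr 1
  ext i
  fin_cases i <;> rfl

theorem eq_inner_smul_of_areaForm_eq_zero {a x : E} (ha : ‖a‖ = 1) (h : o.areaForm a x = 0) :
    x = ⟪a, x⟫ • a := by
  refine ext_inner_left ℝ fun y => ?_
  have := o.inner_mul_inner_add_areaForm_mul_areaForm a x y
  rw [h, ha, real_inner_comm y x] at this
  rw [real_inner_smul_right, real_inner_comm a y]
  linarith

theorem areaForm_eq_zero_of_tendsto {T : ℕ → E →ₗ[ℝ] E} {x y : E} {δ : ℕ → ℝ}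
    (hT : ∀ N, LinearMap.det (T N) ≠ 0) (hδ : Tendsto δ atTop (𝓝 0))
    (hle : ∀ᶠ N in atTop, (‖T N x‖ * ‖T N y‖) ^ 2 ≤ δ N * LinearMap.det (T N) ^ 2) :
    o.areaForm x y = 0 := by
  suffices o.areaForm x y ^ 2 ≤ 0 by nlinarith [sq_nonneg (o.areaForm x y)]
  refine ge_of_tendsto hδ (hle.mono fun N hN => ?_)
  have hsq : (o.areaForm x y * LinearMap.det (T N)) ^ 2 ≤ (‖T N x‖ * ‖T N y‖) ^ 2 := by
    rw [mul_comm, ← areaForm_map_linearMap, ← sq_abs]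
    exact pow_le_pow_left₀ (abs_nonneg _) (o.abs_areaForm_le _ _) 2
  rw [mul_pow] at hsq
  exact le_of_mul_le_mul_right (hsq.trans hN) (by positivity [hT N])

end Orientation

theorem ContinuousLinearMap.comp_eq_id_comm {E : Type*} [NormedAddCommGroup E] [NormedSpace ℝ E]
    [FiniteDimensional ℝ E] {A B : E →L[ℝ] E} :
    A.comp B = ContinuousLinearMap.id ℝ E ↔ B.comp A = ContinuousLinearMap.id ℝ E := by
  simp only [← ContinuousLinearMap.coe_inj, ContinuousLinearMap.toLinearMap_comp,
    ContinuousLinearMap.coe_id]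
  exact LinearMap.comp_eq_id_comm _ _

theorem Set.LeftInvOn.iterate {α : Type*} {f g : α → α} {s : Set α} (h : LeftInvOn g f s)
    (hf : MapsTo f s s) (n : ℕ) : LeftInvOn g^[n] f^[n] s := by
  induction n with
  | zero => exact fun _ _ => rfl
  | succ n ih =>
    rw [iterate_succ' g, iterate_succ f]
    exact h.comp ih hf

section Iterate

variable {E : Type*} [NormedAddCommGroup E] [NormedSpace ℝ E] {f g : E → E} {s : Set E} {p : E}

theorem differentiableAt_iterate_of_mapsTo (hf : MapsTo f s s)
    (hd : ∀ q ∈ s, DifferentiableAt ℝ f q) (n : ℕ) (hp : p ∈ s) :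
    DifferentiableAt ℝ (f^[n]) p := by
  induction n generalizing p with
  | zero => exact differentiableAt_id
  | succ n ih =>
    rw [iterate_succ]
    exact (ih (hf hp)).comp p (hd p hp)

theorem fderiv_iterate_add_of_mapsTo (hf : MapsTo f s s) (hd : ∀ q ∈ s, DifferentiableAt ℝ f q)
    (m n : ℕ) (hp : p ∈ s) :
    fderiv ℝ (f^[m + n]) p = (fderiv ℝ (f^[m]) (f^[n] p)).comp (fderiv ℝ (f^[n]) p) := by
  rw [iterate_add, fderiv_comp p (differentiableAt_iterate_of_mapsTo hf hd m (hf.iterate n hp))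
    (differentiableAt_iterate_of_mapsTo hf hd n hp)]

theorem fderiv_iterate_comp_eq_id_of_leftInvOn (hs : IsOpen s) (hf : MapsTo f s s)
    (hgf : LeftInvOn g f s) (n : ℕ) (hp : p ∈ s) (hdf : DifferentiableAt ℝ (f^[n]) p)
    (hdg : DifferentiableAt ℝ (g^[n]) (f^[n] p)) :
    (fderiv ℝ (g^[n]) (f^[n] p)).comp (fderiv ℝ (f^[n]) p) = .id ℝ E := by
  rw [← fderiv_comp p hdg hdf, ← fderiv_id]
  exact EventuallyEq.fderiv_eq (eventually_of_mem (hs.mem_nhds hp) (hgf.iterate hf n))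

end Iterate

instance : Fact (finrank ℝ E2 = 2) := ⟨finrank_euclideanSpace_fin⟩

section Jacobian

variable {f g h : E2 → E2} {p q x v : E2}

theorem jacAt_of_fderiv_eq_comp (H : fderiv ℝ h x = (fderiv ℝ g q).comp (fderiv ℝ f p)) :
    jacAt h x = jacAt g q * jacAt f p := by
  rw [jacAt, H, ContinuousLinearMap.toLinearMap_comp, LinearMap.det_comp]
  rfl

theorem jacAt_mul_jacAt_eq_one (H : (fderiv ℝ g q).comp (fderiv ℝ f p) = .id ℝ E2) :
    jacAt g q * jacAt f p = 1 := by
  simpa [jacAt, LinearMap.det_comp] using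
    congrArg (fun T : E2 →L[ℝ] E2 => LinearMap.det T.toLinearMap) H

theorem fderiv_apply_ne_zero_of_jacAt_ne_zero (hJ : jacAt f p ≠ 0) (hv : v ≠ 0) :
    fderiv ℝ f p v ≠ 0 :=
  ((fderiv ℝ f p).toContinuousLinearEquivOfDetNeZero hJ).map_ne_zero_iff.2 hv

theorem differentiableAt_of_leftInvOn {Ω : Set E2} {n : WithTop ℕ∞} (hn : n ≠ 0) (hΩ : IsOpen Ω)
    (hf : ContDiffOn ℝ n f Ω) (hgf : LeftInvOn g f Ω) (hx : x ∈ Ω) (hJ : jacAt f x ≠ 0) :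
    DifferentiableAt ℝ g (f x) := by
  have hdet : (fderiv ℝ f x).det ≠ 0 := hJ
  have hΦ : HasStrictFDerivAt f
      ((fderiv ℝ f x).toContinuousLinearEquivOfDetNeZero hdet : E2 →L[ℝ] E2) x := by
    rw [ContinuousLinearMap.coe_toContinuousLinearEquivOfDetNeZero]
    exact (hf.contDiffAt (hΩ.mem_nhds hx)).hasStrictFDerivAt hn
  exact (hΦ.to_local_left_inverse (eventually_of_mem (hΩ.mem_nhds hx) hgf)).differentiableAt

end Jacobian

structure IsInvPairOn (f g : E2 → E2) (Λ : Set E2) : Prop where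
  mapsTo : MapsTo f Λ Λ
  mapsTo_inv : MapsTo g Λ Λ
  leftInvOn : LeftInvOn g f Λ
  rightInvOn : RightInvOn g f Λ
  differentiableAt : ∀ p ∈ Λ, DifferentiableAt ℝ f p
  differentiableAt_inv : ∀ p ∈ Λ, DifferentiableAt ℝ g p
  jacAt_pos : ∀ p ∈ Λ, 0 < jacAt f p
  fderiv_iterate_comp : ∀ n, ∀ p ∈ Λ,
    (fderiv ℝ (g^[n]) (f^[n] p)).comp (fderiv ℝ (f^[n]) p) = .id ℝ E2

namespace IsInvPairOn

variable {f g : E2 → E2} {Λ : Set E2} {p : E2}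

theorem of_contDiffOn {Ω : Set E2} {n : WithTop ℕ∞} (hn : n ≠ 0) (hΩ : IsOpen Ω)
    (hf : ContDiffOn ℝ n f Ω) (hfΩ : MapsTo f Ω Ω) (hJ : ∀ x ∈ Ω, 0 < jacAt f x)
    (hgf : LeftInvOn g f Ω) (hgΛ : MapsTo g Λ Λ) (hΛΩ : Λ ⊆ Ω) (hfΛ : f '' Λ = Λ) :
    IsInvPairOn f g Λ := by
  have hfΛ' : MapsTo f Λ Λ := fun p hp => hfΛ ▸ mem_image_of_mem f hp
  have hdf : ∀ p ∈ Λ, DifferentiableAt ℝ f p := fun p hp =>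
    (hf.contDiffAt (hΩ.mem_nhds (hΛΩ hp))).differentiableAt hn
  have hdg : ∀ q ∈ Λ, DifferentiableAt ℝ g q := by
    rw [← hfΛ]
    rintro _ ⟨x, hx, rfl⟩
    exact differentiableAt_of_leftInvOn hn hΩ hf hgf (hΛΩ hx) (hJ x (hΛΩ hx)).ne'
  refine ⟨hfΛ', hgΛ, hgf.mono hΛΩ, hfΛ ▸ (hgf.mono hΛΩ).rightInvOn_image, hdf, hdg,
    fun p hp => hJ p (hΛΩ hp), fun k p hp => ?_⟩
  exact fderiv_iterate_comp_eq_id_of_leftInvOn hΩ hfΩ hgf k (hΛΩ hp)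
    (differentiableAt_iterate_of_mapsTo hfΛ' hdf k hp)
    (differentiableAt_iterate_of_mapsTo hgΛ hdg k (hfΛ'.iterate k hp))

theorem fderiv_iterate_add (h : IsInvPairOn f g Λ) (m n : ℕ) (hp : p ∈ Λ) :
    fderiv ℝ (f^[m + n]) p = (fderiv ℝ (f^[m]) (f^[n] p)).comp (fderiv ℝ (f^[n]) p) :=
  fderiv_iterate_add_of_mapsTo h.mapsTo h.differentiableAt m n hp

theorem jacAt_iterate_pos (h : IsInvPairOn f g Λ) (n : ℕ) (hp : p ∈ Λ) : 0 < jacAt (f^[n]) p := by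
  induction n generalizing p with
  | zero => simp [jacAt]
  | succ n ih =>
    rw [jacAt_of_fderiv_eq_comp (h.fderiv_iterate_add n 1 hp), iterate_one]
    exact mul_pos (ih (h.mapsTo hp)) (h.jacAt_pos p hp)

theorem symm (h : IsInvPairOn f g Λ) : IsInvPairOn g f Λ := by
  refine ⟨h.mapsTo_inv, h.mapsTo, h.rightInvOn, h.leftInvOn, h.differentiableAt_inv,
    h.differentiableAt, fun q hq => ?_, fun n q hq => ?_⟩
  · have hone := jacAt_mul_jacAt_eq_one (h.fderiv_iterate_comp 1 (g q) (h.mapsTo_inv hq))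
    rw [iterate_one, iterate_one, h.rightInvOn hq] at hone
    exact pos_of_mul_pos_left (hone ▸ one_pos) (h.jacAt_pos _ (h.mapsTo_inv hq)).le
  · have hgf := h.fderiv_iterate_comp n (g^[n] q) (h.mapsTo_inv.iterate n hq)
    rw [h.rightInvOn.iterate h.mapsTo_inv n hq] at hgf
    exact ContinuousLinearMap.comp_eq_id_comm.1 hgf

end IsInvPairOn

/-- The projective derivative `∂_ℙfⁿ(E) = Jac_p fⁿ / ‖D_pfⁿ|_E‖²`, `E = ℝv`, is at least `θ⁻ⁿ`. -/
def ProjExpanding (f : E2 → E2) (p : E2) (θ : ℝ) (v : E2) : Prop :=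
  ∀ n : ℕ, 1 ≤ n → ‖fderiv ℝ (f^[n]) p v‖ ^ 2 ≤ θ ^ n * jacAt (f^[n]) p

theorem sq_le_rpow_mul_of_log_le {a J lam t : ℝ} (ha : 0 < a) (hJ : 0 < J) (hlam : 0 < lam)
    (h : 2 * log a - log J ≤ t * log lam) : a ^ 2 ≤ lam ^ t * J := by
  rw [← div_le_iff₀ hJ, ← log_le_log_iff (by positivity) (by positivity),
    log_div (by positivity) hJ.ne', log_pow, log_rpow hlam]
  push_cast
  linarith

section Regularity

variable {f : E2 → E2} {p v : E2} {lam ε : ℝ} {r : ℕ}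

theorem FwdRegV.projExpanding (h : FwdRegV f p lam 1 ε r ⊤ v) (hr : 1 ≤ r) (hlam : 0 < lam)
    (hJ : ∀ n, 0 < jacAt (f^[n]) p) (hv : v ≠ 0) : ProjExpanding f p (lam ^ (1 - ε)) v := by
  intro n hn
  set J := jacAt (f^[n]) p
  set a := ‖fderiv ℝ (f^[n]) p v‖
  have hJn : 0 < J := hJ n
  have ha : 0 < a := norm_pos_iff.2 (fderiv_apply_ne_zero_of_jacAt_ne_zero hJn.ne' hv)
  have hlog : ∀ s : ℤ, s = -r ∨ s = r - 1 →
      s * log J - (s - 1) * log a ≤ (1 - ε) * n * log lam := by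
    intro s hs
    have hs := (h n hn le_top s hs).2
    rw [one_mul, ← log_le_log_iff (div_pos (zpow_pos hJn _) (zpow_pos ha _)) (by positivity),
      log_div (zpow_pos hJn _).ne' (zpow_pos ha _).ne', log_zpow, log_zpow, log_rpow hlam] at hs
    push_cast at hs
    linarith
  have h₁ := hlog (r - 1) (Or.inr rfl)
  have h₂ := hlog (-r) (Or.inl rfl)
  push_cast at h₁ h₂
  have hr₁ : (1 : ℝ) ≤ r := by exact_mod_cast hr
  have hcomb : (2 * r - 1 : ℝ) * (2 * log a - log J) ≤ (2 * r - 1) * ((1 - ε) * n * log lam) := by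
    linarith [mul_le_mul_of_nonneg_left h₁ (by linarith : (0 : ℝ) ≤ r - 1),
      mul_le_mul_of_nonneg_left h₂ (by linarith : (0 : ℝ) ≤ r)]
  rw [← rpow_mul_natCast hlam.le]
  exact sq_le_rpow_mul_of_log_le ha hJn hlam (le_of_mul_le_mul_left hcomb (by linarith))

theorem BwdRegH.projExpanding (h : BwdRegH f p lam 1 ε r ⊤ v) (hr : 1 ≤ r) (hlam : 0 < lam)
    (hJ : ∀ n, 0 < jacAt (f^[n]) p) (hv : v ≠ 0) : ProjExpanding f p (lam ^ (1 - ε)) v := by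
  intro n hn
  set J := jacAt (f^[n]) p
  set a := ‖fderiv ℝ (f^[n]) p v‖
  have hJn : 0 < J := hJ n
  have ha : 0 < a := norm_pos_iff.2 (fderiv_apply_ne_zero_of_jacAt_ne_zero hJn.ne' hv)
  have hlog : ∀ s : ℤ, s = -r + 1 ∨ s = r →
      -(1 - ε) * n * log lam ≤ log J - (s + 1) * log a := by
    intro s hs
    have hs := (h n hn le_top s hs).1
    rw [inv_one, one_mul, ← log_le_log_iff (by positivity) (div_pos hJn (zpow_pos ha _)),
      log_div hJn.ne' (zpow_pos ha _).ne', log_zpow, log_rpow hlam] at hs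
    push_cast at hs
    linarith
  have h₁ := hlog r (Or.inr rfl)
  have h₂ := hlog (-r + 1) (Or.inl rfl)
  push_cast at h₁ h₂
  have hr₁ : (1 : ℝ) ≤ r := by exact_mod_cast hr
  have hcomb : (2 * r - 1 : ℝ) * (2 * log a - log J) ≤ (2 * r - 1) * ((1 - ε) * n * log lam) := by
    linarith [mul_le_mul_of_nonneg_left h₁ (by linarith : (0 : ℝ) ≤ r),
      mul_le_mul_of_nonneg_left h₂ (by linarith : (0 : ℝ) ≤ r - 1)]
  rw [← rpow_mul_natCast hlam.le]
  exact sq_le_rpow_mul_of_log_le ha hJn hlam (le_of_mul_le_mul_left hcomb (by linarith))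

end Regularity

theorem one_le_div_sq_iff {J x : ℝ} : 1 ≤ J / x ^ 2 ↔ x ≠ 0 ∧ x ^ 2 ≤ J := by
  rcases eq_or_ne x 0 with rfl | hx
  · simp
  · rw [le_div_iff₀ (by positivity), one_mul]
    exact ⟨fun h => ⟨hx, h⟩, And.right⟩

theorem GenCritPoint.symm {f g : E2 → E2} {c : E2} (h : GenCritPoint f g c) :
    GenCritPoint g f c :=
  let ⟨v, hv, hcrit⟩ := h
  ⟨v, hv, fun n hn => (hcrit n hn).symm⟩

theorem areaForm_eq_zero_of_projExpanding (o : Orientation ℝ E2 (Fin 2)) {f : E2 → E2}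
    {c v z : E2} {θ : ℝ} {k : ℕ} (hθ₀ : 0 ≤ θ) (hθ₁ : θ < 1) (hJ : ∀ n, 0 < jacAt (f^[n]) c)
    (hv : ProjExpanding f c θ v)
    (hz : ∀ n, 1 ≤ n → ‖fderiv ℝ (f^[n + k]) c z‖ ^ 2 * jacAt (f^[k]) c ≤ jacAt (f^[n + k]) c) :
    o.areaForm v z = 0 := by
  refine o.areaForm_eq_zero_of_tendsto (T := fun n => fderiv ℝ (f^[n + k]) c)
    (δ := fun n => θ ^ (n + k) / jacAt (f^[k]) c) (fun n => (hJ (n + k)).ne') ?_ ?_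
  · simpa using ((tendsto_pow_atTop_nhds_zero_of_lt_one hθ₀ hθ₁).comp
      (tendsto_add_atTop_nat k)).div_const (jacAt (f^[k]) c)
  · filter_upwards [eventually_ge_atTop 1] with n hn
    have hv' := hv (n + k) (by omega)
    have hz' := hz n hn
    change (‖fderiv ℝ (f^[n + k]) c v‖ * ‖fderiv ℝ (f^[n + k]) c z‖) ^ 2 ≤
      θ ^ (n + k) / jacAt (f^[k]) c * jacAt (f^[n + k]) c ^ 2
    rw [div_mul_eq_mul_div, le_div_iff₀ (hJ k), mul_pow, mul_assoc]
    calc _ ≤ θ ^ (n + k) * jacAt (f^[n + k]) c * jacAt (f^[n + k]) c :=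
          mul_le_mul hv' hz' (mul_nonneg (sq_nonneg _) (hJ k).le)
            (mul_nonneg (pow_nonneg hθ₀ _) (hJ _).le)
      _ = _ := by ring

namespace IsInvPairOn

variable {f g : E2 → E2} {Λ : Set E2} {c v : E2} {θ : ℝ}

theorem genCritPoint (h : IsInvPairOn f g Λ) (hc : c ∈ Λ) (hv : ‖v‖ = 1) (hθ₀ : 0 ≤ θ)
    (hθ₁ : θ ≤ 1) (hf : ProjExpanding f c θ v) (hg : ProjExpanding g c θ v) :
    GenCritPoint f g c := by
  have hv0 : v ≠ 0 := norm_ne_zero_iff.1 (by rw [hv]; exact one_ne_zero)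
  have hcrit : ∀ {f' : E2 → E2}, (∀ n, 0 < jacAt (f'^[n]) c) → ProjExpanding f' c θ v →
      ∀ n, 1 ≤ n → 1 ≤ jacAt (f'^[n]) c / ‖fderiv ℝ (f'^[n]) c v‖ ^ 2 := by
    intro f' hJ hexp n hn
    refine one_le_div_sq_iff.2 ⟨norm_ne_zero_iff.2
      (fderiv_apply_ne_zero_of_jacAt_ne_zero (hJ n).ne' hv0), ?_⟩
    exact (hexp n hn).trans (mul_le_of_le_one_left (hJ n).le (pow_le_one₀ hθ₀ hθ₁))
  exact ⟨v, hv, fun n hn => ⟨hcrit (h.jacAt_iterate_pos · hc) hf n hn,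
    hcrit (h.symm.jacAt_iterate_pos · hc) hg n hn⟩⟩

theorem not_genCritPoint_iterate (h : IsInvPairOn f g Λ) (hc : c ∈ Λ) (hv : ‖v‖ = 1)
    (hθ₀ : 0 ≤ θ) (hθ₁ : θ < 1) (hexp : ProjExpanding f c θ v) {k : ℕ} (hk : k ≠ 0) :
    ¬ GenCritPoint f g (f^[k] c) := by
  rintro ⟨w, hw, hcrit⟩
  let o : Orientation ℝ E2 (Fin 2) := (EuclideanSpace.basisFun (Fin 2) ℝ).toBasis.orientation
  set A := fderiv ℝ (f^[k]) c
  set B := fderiv ℝ (g^[k]) (f^[k] c)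
  have hJ : ∀ n, 0 < jacAt (f^[n]) c := (h.jacAt_iterate_pos · hc)
  have hBA : B.comp A = .id ℝ E2 := h.fderiv_iterate_comp k c hc
  have hAB : A (B w) = w := congr($(ContinuousLinearMap.comp_eq_id_comm.2 hBA) w)
  have hpar : o.areaForm v (B w) = 0 := by
    refine areaForm_eq_zero_of_projExpanding o (k := k) hθ₀ hθ₁ hJ hexp fun n hn => ?_
    have hchain := h.fderiv_iterate_add n k hc
    rw [hchain, ContinuousLinearMap.comp_apply, hAB, jacAt_of_fderiv_eq_comp hchain]
    exact mul_le_mul_of_nonneg_right (one_le_div_sq_iff.1 (hcrit n hn).1).2 (hJ k).le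
  set t := ⟪v, B w⟫
  have hBw : B w = t • v := o.eq_inner_smul_of_areaForm_eq_zero hv hpar
  have hta : t ^ 2 * ‖A v‖ ^ 2 = 1 := by
    rw [← one_pow 2, ← hw, ← hAB, hBw, map_smul, norm_smul, mul_pow, Real.norm_eq_abs, sq_abs]
  have htJ : t ^ 2 * jacAt (f^[k]) c ≤ 1 := by
    have hB := (one_le_div_sq_iff.1 (hcrit k (by omega)).2).2
    rw [hBw, norm_smul, hv, mul_one, Real.norm_eq_abs, sq_abs] at hB
    rw [← jacAt_mul_jacAt_eq_one hBA]
    exact mul_le_mul_of_nonneg_right hB (hJ k).le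
  have hAv : ‖A v‖ ^ 2 < jacAt (f^[k]) c := (hexp k (by omega)).trans_lt
    (mul_lt_of_lt_one_left (hJ k) (pow_lt_one₀ hθ₀ hθ₁ hk))
  have ht : 0 < t ^ 2 := by
    have : t ≠ 0 := fun h0 => by simp [h0] at hta
    positivity
  nlinarith [mul_lt_mul_of_pos_left hAv ht]

end IsInvPairOn

theorem iterZ_natCast (F G : E2 → E2) (k : ℕ) : iterZ F G k = F^[k] := by
  simp [iterZ]

theorem iterZ_neg_natCast (F G : E2 → E2) {k : ℕ} (hk : k ≠ 0) : iterZ F G (-k) = G^[k] := by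
  rw [iterZ, if_neg (by omega)]
  simp

/-- **A regular critical value is the unique general critical point in its orbit.**
There are constants `C ≥ 1` and `β ∈ (0,1)`, depending only on `r`, such that the following
holds. Let `F` be an orientation-preserving, dissipative `C^r`-diffeomorphism (`r ≥ 2`) of a
domain `Ω ⊆ ℝ²` onto its image `F(Ω) ⊆ Ω`, with inverse `G`, let `Λ ⊆ Ω` be compact and
totally invariant, `λ ∈ (0,1)`, and `ε ∈ (0,1)` with `C·ε^β < 1`. If `c₁ ∈ Λ` is an
`ε`-regular critical value (there is a direction `E*` along which `c₁` is `∞`-times forward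
`(1,ε)_v`-regular and `∞`-times backward `(1,ε)_h`-regular), then `c₁` is a general critical
point of `F` and no other point `F^m(c₁)`, `m ≠ 0`, of its orbit is one. -/
theorem unique_general_critical_point_in_orbit (r : ℕ) (hr : 2 ≤ r) :
    ∃ C β : ℝ, 1 ≤ C ∧ 0 < β ∧ β < 1 ∧
      ∀ (Ω : Set E2) (F G : E2 → E2) (Λ : Set E2) (lam ε : ℝ) (c₁ : E2),
        IsOpen Ω → ContDiffOn ℝ r F Ω → Set.InjOn F Ω → Set.MapsTo F Ω Ω →
        (∀ x ∈ Ω, 0 < jacAt F x) → (∀ x ∈ Ω, jacAt F x < 1) →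
        ContDiffOn ℝ r G (F '' Ω) → (∀ x ∈ Ω, G (F x) = x) → Set.MapsTo G Λ Λ →
        Λ ⊆ Ω → IsCompact Λ → F '' Λ = Λ →
        0 < lam → lam < 1 → 0 < ε → ε < 1 → C * ε ^ β < 1 →
        c₁ ∈ Λ →
        (∃ v : E2, ‖v‖ = 1 ∧
          FwdRegV F c₁ lam 1 ε r ⊤ v ∧ BwdRegH G c₁ lam 1 ε r ⊤ v) →
        GenCritPoint F G c₁ ∧
          ∀ m : ℤ, m ≠ 0 → ¬ GenCritPoint F G (iterZ F G m c₁) := by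
  refine ⟨1, 1 / 2, le_rfl, by norm_num, by norm_num, ?_⟩
  intro Ω F G Λ lam ε c₁ hΩ hF _ hFΩ hJ _ _ hGF hGΛ hΛΩ _ hFΛ hlam₀ hlam₁ _ hε₁ _ hc₁
    ⟨v, hv, hfwd, hbwd⟩
  have hpair : IsInvPairOn F G Λ := .of_contDiffOn (by exact_mod_cast (by omega : r ≠ 0)) hΩ hF
    hFΩ hJ hGF hGΛ hΛΩ hFΛ
  have hv₀ : v ≠ 0 := norm_ne_zero_iff.1 (by rw [hv]; exact one_ne_zero)
  have hθ₀ : 0 ≤ lam ^ (1 - ε) := rpow_nonneg hlam₀.le _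
  have hθ₁ : lam ^ (1 - ε) < 1 := rpow_lt_one hlam₀.le hlam₁ (by linarith)
  have hF' := hfwd.projExpanding (by omega) hlam₀ (hpair.jacAt_iterate_pos · hc₁) hv₀
  have hG' := hbwd.projExpanding (by omega) hlam₀ (hpair.symm.jacAt_iterate_pos · hc₁) hv₀
  refine ⟨hpair.genCritPoint hc₁ hv hθ₀ hθ₁.le hF' hG', fun m hm => ?_⟩
  obtain ⟨k, rfl | rfl⟩ := Int.eq_nat_or_neg m
  · rw [iterZ_natCast]
    exact hpair.not_genCritPoint_iterate hc₁ hv hθ₀ hθ₁ hF' (by omega)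
  · rw [iterZ_neg_natCast _ _ (by omega)]
    exact fun hcrit => hpair.symm.not_genCritPoint_iterate hc₁ hv hθ₀ hθ₁ hG' (by omega) hcrit.symm
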